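/- arXiv:2302.00942 — 3 statements merged into one kernel-verified Lean document; each statement's English description precedes it below -/
import Mathlib

section
/- Let A ∈ ℝ^{N×m} and B ∈ ℝ^{N×m} with B^⊤A invertible. Then exp(Λ·AB^⊤) = I + A·[exp(Λ·B^⊤A) − I]·(B^⊤A)^{−1}·B^⊤, where exp denotes matrix exponential and Λ ∈ ℝ. -/
open Matrix NormedSpace

lemma pow_ABt {N m : ℕ} (A B : Matrix (Fin N) (Fin m) ℝ) (n : ℕ) :
    (A * Bᵀ) ^ (n + 1) = A * (Bᵀ * A) ^ n * Bᵀ := by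
  induction n with
  | zero => simp [pow_succ, Matrix.mul_assoc]
  | succ n ih => rw [pow_succ, ih, pow_succ]; simp [Matrix.mul_assoc]

open Matrix in
theorem stmt_7 {N m : ℕ} (A B : Matrix (Fin N) (Fin m) ℝ) (Λ : ℝ)
    (h : IsUnit (Bᵀ * A)) :
    NormedSpace.exp (Λ • (A * Bᵀ)) =
      1 + A * (NormedSpace.exp (Λ • (Bᵀ * A)) - 1) * (Bᵀ * A)⁻¹ * Bᵀ := by
  letI : NormedRing (Matrix (Fin N) (Fin N) ℝ) := Matrix.linftyOpNormedRing
  letI : NormedAlgebra ℝ (Matrix (Fin N) (Fin N) ℝ) := Matrix.linftyOpNormedAlgebra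
  letI : NormedRing (Matrix (Fin m) (Fin m) ℝ) := Matrix.linftyOpNormedRing
  letI : NormedAlgebra ℝ (Matrix (Fin m) (Fin m) ℝ) := Matrix.linftyOpNormedAlgebra
  have hC : (Bᵀ * A) * (Bᵀ * A)⁻¹ = 1 :=
    Matrix.mul_nonsing_inv _ (Matrix.isUnit_iff_isUnit_det _ |>.mp h)
  -- linear map pushing through tsum
  have key : ∀ (f : ℕ → Matrix (Fin m) (Fin m) ℝ), Summable f →
      A * (∑' n, f n) * (Bᵀ * A)⁻¹ * Bᵀ = ∑' n, A * f n * (Bᵀ * A)⁻¹ * Bᵀ := by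
    intro f hf
    let L : Matrix (Fin m) (Fin m) ℝ →ₗ[ℝ] Matrix (Fin N) (Fin N) ℝ :=
      { toFun := fun X => A * X * (Bᵀ * A)⁻¹ * Bᵀ
        map_add' := by intros; simp [Matrix.mul_add, Matrix.add_mul]
        map_smul' := by intros; simp [Matrix.mul_smul, Matrix.smul_mul] }
    exact (LinearMap.toContinuousLinearMap L).map_tsum hf
  -- summability of shifted exp series
  have hsum : Summable fun n : ℕ => (Nat.factorial n : ℝ)⁻¹ • (Λ • (Bᵀ * A)) ^ n :=
    NormedSpace.expSeries_summable' _
  have hsum' : Summable fun n : ℕ => (Nat.factorial (n + 1) : ℝ)⁻¹ • (Λ • (Bᵀ * A)) ^ (n + 1) :=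
    hsum.comp_injective (add_left_injective 1)
  have hsumN : Summable fun n : ℕ => (Nat.factorial n : ℝ)⁻¹ • (Λ • (A * Bᵀ)) ^ n :=
    NormedSpace.expSeries_summable' _
  have hterm : ∀ n : ℕ,
      A * ((Nat.factorial (n + 1) : ℝ)⁻¹ • (Λ • (Bᵀ * A)) ^ (n + 1)) * (Bᵀ * A)⁻¹ * Bᵀ =
        (Nat.factorial (n + 1) : ℝ)⁻¹ • (Λ • (A * Bᵀ)) ^ (n + 1) := by
    intro n
    rw [smul_pow, smul_pow]
    rw [pow_succ (Bᵀ * A)]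
    simp only [Matrix.mul_smul, Matrix.smul_mul, smul_smul]
    congr 1
    rw [← Matrix.mul_assoc,
      Matrix.mul_nonsing_inv_cancel_right _ _ (Matrix.isUnit_iff_isUnit_det _ |>.mp h),
      pow_ABt]
  rw [NormedSpace.exp_eq_tsum ℝ, NormedSpace.exp_eq_tsum ℝ]
  beta_reduce
  rw [Summable.tsum_eq_zero_add hsumN, Summable.tsum_eq_zero_add hsum]
  simp only [Nat.factorial_zero, Nat.cast_one, inv_one, pow_zero, one_smul]
  rw [add_sub_cancel_left, key _ hsum']
  congr 1
  exact tsum_congr fun n => (hterm n).symm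
end

section
/- Let ℓ(a,b) = (a−b)^2. Then ℓ can be decomposed as ℓ(a,b) = f_1(a) + f_2(b) − h_1(a)h_2(b) with f_1(x) = f_2(x) = x^2, h_1(x) = x, h_2(x) = 2x. Consequently, for matrices C ∈ ℝ^{n×n}, D ∈ ℝ^{m×m}, T ∈ ℝ^{n×m} with row sums p = T·1_m and column sums q = T^⊤·1_n, the matrix L with L[k,l] = Σ_{i,j} (C[i,k] − D[j,l])^2 T[i,j] satisfies L = f_1(C)^⊤ p 1_m^⊤ + 1_n q^⊤ f_2(D) − h_1(C)^⊤ T h_2(D). -/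
open Matrix in
theorem stmt_10 {n m : ℕ} (C : Matrix (Fin n) (Fin n) ℝ) (D : Matrix (Fin m) (Fin m) ℝ)
    (T : Matrix (Fin n) (Fin m) ℝ) (p : Fin n → ℝ) (q : Fin m → ℝ)
    (hp : p = T *ᵥ (fun _ => 1)) (hq : q = Tᵀ *ᵥ (fun _ => 1))
    (L : Matrix (Fin n) (Fin m) ℝ)
    (hL : ∀ k l, L k l = ∑ i, ∑ j, (C i k - D j l) ^ 2 * T i j) :
    (∀ a b : ℝ, (a - b) ^ 2 = a ^ 2 + b ^ 2 - a * (2 * b)) ∧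
    L = Matrix.vecMulVec ((C.map fun x => x ^ 2)ᵀ *ᵥ p) (fun _ => 1)
      + Matrix.vecMulVec (fun _ => 1) (q ᵥ* (D.map fun x => x ^ 2))
      - Cᵀ * T * (D.map fun x => 2 * x) := by
  refine ⟨fun a b => by ring, ?_⟩
  ext k l
  simp only [hL, hp, hq, Matrix.add_apply, Matrix.sub_apply, Matrix.vecMulVec_apply,
    Matrix.mulVec, Matrix.vecMul, Matrix.mul_apply, Matrix.map_apply, Matrix.transpose_apply,
    dotProduct, Finset.sum_mul, Finset.mul_sum, mul_one]
  conv_rhs => rw [Finset.sum_comm (f := fun (x : Fin m) (i : Fin n) => C i k * T i x * (2 * D x l))]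
  rw [Finset.sum_comm (f := fun (x : Fin m) (i : Fin n) => 1 * (T i x * D x l ^ 2))]
  rw [← Finset.sum_add_distrib, ← Finset.sum_sub_distrib]
  refine Finset.sum_congr rfl fun i _ => ?_
  rw [← Finset.sum_add_distrib, ← Finset.sum_sub_distrib]
  exact Finset.sum_congr rfl fun j _ => by ring
end

section
/- Let G be a connected graph, S a separator with G[S] connected, separating A and B, and suppose the shortest path P from i ∈ A to j ∈ A uses a vertex of B. Let x and y be respectively the first and last vertices of S encountered along P from i to j. Then x ≠ y, the subpath of P from x to y is a shortest path from x to y in G, and its length is at most |S| − 1. -/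
theorem stmt_15 {V : Type*} [Fintype V] [DecidableEq V] (G : SimpleGraph V)
    (hG : G.Connected) (A B : Set V) (S : Finset V)
    (hpart : ∀ u : V, (u ∈ A ∧ u ∉ B ∧ u ∉ S) ∨ (u ∈ B ∧ u ∉ A ∧ u ∉ S) ∨
      (u ∈ S ∧ u ∉ A ∧ u ∉ B))
    (hSconn : (G.induce (S : Set V)).Connected)
    (hnoedge : ∀ a ∈ A, ∀ b ∈ B, ¬ G.Adj a b)
    (hsep : ∀ (a b : V), a ∈ A → b ∈ B → ∀ q : G.Walk a b, ∃ s ∈ S, s ∈ q.support)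
    (i j : V) (hi : i ∈ A) (hj : j ∈ A)
    (x y : V) (P1 : G.Walk i x) (P2 : G.Walk x y) (P3 : G.Walk y j)
    (hP : ((P1.append P2).append P3).IsPath)
    (hshort : ((P1.append P2).append P3).length = G.dist i j)
    (hB : ∃ b ∈ B, b ∈ ((P1.append P2).append P3).support)
    (hx : x ∈ S) (hy : y ∈ S)
    (hfirst : ∀ u ∈ P1.support, u ∈ S → u = x)
    (hlast : ∀ u ∈ P3.support, u ∈ S → u = y) :
    x ≠ y ∧ P2.length = G.dist x y ∧ P2.length ≤ S.card - 1 := by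
  classical
  have hP12 : (P1.append P2).IsPath := hP.of_append_left
  have hP1 : P1.IsPath := hP12.of_append_left
  have hP3 : P3.IsPath := hP.of_append_right
  obtain ⟨b, hbB, hbW⟩ := hB
  have hbS : b ∉ S := by rcases hpart b with h | h | h <;> tauto
  -- b is not on P1
  have hb1 : b ∉ P1.support := by
    intro hb
    obtain ⟨s, hsS, hs⟩ := hsep i b hi hbB (P1.takeUntil b hb)
    have hsx : s = x := hfirst s (P1.support_takeUntil_subset hb hs) hsS
    rw [hsx] at hs
    have hnd : P1.support.Nodup := hP1.support_nodup
    rw [← P1.take_spec hb, SimpleGraph.Walk.support_append] at hnd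
    have hdisj := (List.nodup_append'.mp hnd).2.2
    have hxd : x ∈ (P1.dropUntil b hb).support := SimpleGraph.Walk.end_mem_support _
    rw [SimpleGraph.Walk.support_eq_cons] at hxd
    rcases List.mem_cons.mp hxd with h | h
    · exact hbS (h ▸ hx)
    · exact hdisj hs h
  -- b is not on P3
  have hb3 : b ∉ P3.support := by
    intro hb
    obtain ⟨s, hsS, hs⟩ := hsep j b hj hbB (P3.dropUntil b hb).reverse
    rw [SimpleGraph.Walk.support_reverse, List.mem_reverse] at hs
    have hsy : s = y := hlast s (P3.support_dropUntil_subset hb hs) hsS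
    rw [hsy] at hs
    have hnd : P3.support.Nodup := hP3.support_nodup
    rw [← P3.take_spec hb, SimpleGraph.Walk.support_append] at hnd
    have hdisj := (List.nodup_append'.mp hnd).2.2
    have hyt : y ∈ (P3.takeUntil b hb).support := SimpleGraph.Walk.start_mem_support _
    rw [SimpleGraph.Walk.support_eq_cons] at hs
    rcases List.mem_cons.mp hs with h | h
    · exact hbS (h ▸ hy)
    · exact hdisj hyt h
  -- x ≠ y
  have hxy : x ≠ y := by
    intro heq
    subst heq
    have hP2 : P2.IsPath := hP12.of_append_right
    have hnil : P2 = SimpleGraph.Walk.nil := SimpleGraph.Walk.isPath_iff_eq_nil.mp hP2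
    rw [SimpleGraph.Walk.mem_support_append_iff, SimpleGraph.Walk.mem_support_append_iff] at hbW
    rcases hbW with (h | h) | h
    · exact hb1 h
    · rw [hnil] at h
      simp at h
      exact hbS (h ▸ hx)
    · exact hb3 h
  refine ⟨hxy, ?_, ?_⟩
  -- P2 is a shortest x-y path
  · have hlen : P1.length + P2.length + P3.length = G.dist i j := by
      rw [← hshort, SimpleGraph.Walk.length_append, SimpleGraph.Walk.length_append]
    have h1 : G.dist i x ≤ P1.length := SimpleGraph.dist_le P1
    have h2 : G.dist x y ≤ P2.length := SimpleGraph.dist_le P2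
    have h3 : G.dist y j ≤ P3.length := SimpleGraph.dist_le P3
    have htri : G.dist i j ≤ G.dist i x + G.dist x y + G.dist y j :=
      le_trans (hG.dist_triangle (v := x)) (by
        have := hG.dist_triangle (u := x) (v := y) (w := j)
        omega)
    omega
  -- length bound via a path inside S
  · obtain ⟨w⟩ := hSconn ⟨x, Finset.mem_coe.mpr hx⟩ ⟨y, Finset.mem_coe.mpr hy⟩
    have hp : w.toPath.1.IsPath := w.toPath.2
    have hlt : w.toPath.1.length < Fintype.card (S : Set V) := hp.length_lt
    have hcard : Fintype.card (S : Set V) = S.card := Fintype.card_coe S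
    have hmap : G.dist x y ≤ w.toPath.1.length := by
      have := SimpleGraph.dist_le (w.toPath.1.map (SimpleGraph.Embedding.induce (S : Set V)).toHom)
      rwa [SimpleGraph.Walk.length_map] at this
    have h2 : G.dist x y ≤ P2.length := SimpleGraph.dist_le P2
    have heq : P2.length = G.dist x y := by
      have hlen : P1.length + P2.length + P3.length = G.dist i j := by
        rw [← hshort, SimpleGraph.Walk.length_append, SimpleGraph.Walk.length_append]
      have h1 : G.dist i x ≤ P1.length := SimpleGraph.dist_le P1
      have h3 : G.dist y j ≤ P3.length := SimpleGraph.dist_le P3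
      have htri : G.dist i j ≤ G.dist i x + G.dist x y + G.dist y j :=
        le_trans (hG.dist_triangle (v := x)) (by
          have := hG.dist_triangle (u := x) (v := y) (w := j)
          omega)
      omega
    omega
end
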